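/- arXiv:math/0505678 — 5 statements merged into one kernel-verified Lean document; each statement's English description precedes it below -/
import Mathlib

section
/- The finite sequence (1, 3, 6, 10, 15, 21, 28, 27, 27, 28) is not unimodal; that is, there do not exist an index m such that the sequence is nondecreasing up to position m and nonincreasing from position m onward. -/
/-- A finite sequence `(f 0, ..., f e)` is unimodal if there is an index `m ≤ e`
such that the sequence is nondecreasing up to `m` and nonincreasing from `m` on. -/
def Unimodal (f : ℕ → ℕ) (e : ℕ) : Prop :=
  ∃ m, m ≤ e ∧ (∀ i j, i ≤ j → j ≤ m → f i ≤ f j) ∧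
    (∀ i j, m ≤ i → i ≤ j → j ≤ e → f j ≤ f i)

theorem stmt_0 :
    ¬ Unimodal (fun i => [1, 3, 6, 10, 15, 21, 28, 27, 27, 28].getD i 0) 9 := by
  rintro ⟨m, hm, h1, h2⟩
  rcases le_or_gt m 8 with h | h
  · have := h2 8 9 h (by norm_num) (by norm_num)
    simp at this
  · have hm9 : m = 9 := le_antisymm hm h
    have := h1 6 7 (by norm_num) (by omega)
    simp at this
end

section
/- The finite sequence (1, 3, 6, 10, 15, 21, 28, 36, 45, 55, 66, 65, 65, 66, 68, 71) is not unimodal. -/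
theorem stmt_2 :
    ¬ Unimodal
      (fun i => [1, 3, 6, 10, 15, 21, 28, 36, 45, 55, 66, 65, 65, 66, 68, 71].getD i 0) 15 := by
  rintro ⟨m, hm, h1, h2⟩
  by_cases h : m ≤ 12
  · have := h2 12 15 h (by norm_num) (by norm_num)
    simp at this
  · have := h1 10 11 (by norm_num) (by omega)
    simp at this
end

section
/- Let e = 15, and define h_i = C(i+2, 2) for 0 ≤ i ≤ 3 and h_i = 5(i-1) for 4 ≤ i ≤ 15 (so h = (1,3,6,10,15,20,25,30,35,40,45,50,55,60,65,70)). Then the sequence H_i = min(h_i + C(2 + 15 - i, 15 - i), C(i + 2, 2)) for 1 ≤ i ≤ 15, together with H_0 = 1, equals (1,3,6,10,15,21,28,36,45,55,66,65,65,66,68,71), which is not unimodal. -/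
theorem stmt_3
    (h : ℕ → ℕ)
    (hle : ∀ i, i ≤ 3 → h i = Nat.choose (i + 2) 2)
    (hgt : ∀ i, 4 ≤ i → i ≤ 15 → h i = 5 * (i - 1))
    (H : ℕ → ℕ)
    (H0 : H 0 = 1)
    (Hdef : ∀ i, 1 ≤ i → i ≤ 15 →
      H i = min (h i + Nat.choose (2 + 15 - i) (15 - i)) (Nat.choose (i + 2) 2)) :
    (∀ i, i ≤ 15 →
      H i = [1, 3, 6, 10, 15, 21, 28, 36, 45, 55, 66, 65, 65, 66, 68, 71].getD i 0) ∧
    ¬ Unimodal H 15 := by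
  have v : ∀ i, i ≤ 15 →
      H i = [1, 3, 6, 10, 15, 21, 28, 36, 45, 55, 66, 65, 65, 66, 68, 71].getD i 0 := by
    intro i hi
    interval_cases i
    · simpa using H0
    · rw [Hdef 1 (by norm_num) (by norm_num), hle 1 (by norm_num)]; decide
    · rw [Hdef 2 (by norm_num) (by norm_num), hle 2 (by norm_num)]; decide
    · rw [Hdef 3 (by norm_num) (by norm_num), hle 3 (by norm_num)]; decide
    · rw [Hdef 4 (by norm_num) (by norm_num), hgt 4 (by norm_num) (by norm_num)]; decide
    · rw [Hdef 5 (by norm_num) (by norm_num), hgt 5 (by norm_num) (by norm_num)]; decide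
    · rw [Hdef 6 (by norm_num) (by norm_num), hgt 6 (by norm_num) (by norm_num)]; decide
    · rw [Hdef 7 (by norm_num) (by norm_num), hgt 7 (by norm_num) (by norm_num)]; decide
    · rw [Hdef 8 (by norm_num) (by norm_num), hgt 8 (by norm_num) (by norm_num)]; decide
    · rw [Hdef 9 (by norm_num) (by norm_num), hgt 9 (by norm_num) (by norm_num)]; decide
    · rw [Hdef 10 (by norm_num) (by norm_num), hgt 10 (by norm_num) (by norm_num)]; decide
    · rw [Hdef 11 (by norm_num) (by norm_num), hgt 11 (by norm_num) (by norm_num)]; decide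
    · rw [Hdef 12 (by norm_num) (by norm_num), hgt 12 (by norm_num) (by norm_num)]; decide
    · rw [Hdef 13 (by norm_num) (by norm_num), hgt 13 (by norm_num) (by norm_num)]; decide
    · rw [Hdef 14 (by norm_num) (by norm_num), hgt 14 (by norm_num) (by norm_num)]; decide
    · rw [Hdef 15 (by norm_num) (by norm_num), hgt 15 (by norm_num) (by norm_num)]; decide
  refine ⟨v, ?_⟩
  rintro ⟨m, hm, hinc, hdec⟩
  have h10 := v 10 (by norm_num)
  have h11 := v 11 (by norm_num)
  have h13 := v 13 (by norm_num)
  rcases le_or_gt m 11 with hc | hc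
  · have := hdec 11 13 hc (by norm_num) (by norm_num)
    simp [h11, h13] at this
  · have := hinc 10 11 (by norm_num) (by omega)
    simp [h10, h11] at this
end

section
/- Let r ≥ 3 and let (1, 3, h_2, ..., h_e) be a non-unimodal sequence of positive integers. Then the sequence (1, r, h_2 + r - 3, h_3 + r - 3, ..., h_e + r - 3) is also non-unimodal. -/
theorem stmt_6 (r : ℕ) (hr : 3 ≤ r) (e : ℕ) (h : ℕ → ℕ)
    (h0 : h 0 = 1) (h1 : h 1 = 3) (hpos : ∀ i, i ≤ e → 0 < h i)
    (hnu : ¬ Unimodal h e) :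
    ¬ Unimodal (fun i => if i = 0 then 1 else if i = 1 then r else h i + r - 3) e := by
  intro hg
  apply hnu
  obtain ⟨m, hme, hup, hdn⟩ := hg
  have key : ∀ i, 1 ≤ i →
      (if i = 0 then 1 else if i = 1 then r else h i + r - 3) = h i + (r - 3) := by
    intro i hi
    rcases Nat.eq_or_lt_of_le hi with h1' | h1'
    · simp only [← h1']
      norm_num
      omega
    · have hi0 : i ≠ 0 := by omega
      have hi1 : i ≠ 1 := by omega
      simp only [hi0, hi1, if_false]
      omega
  by_cases hm : m = 0
  · subst hm
    rcases Nat.eq_zero_or_pos e with he | he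
    · refine ⟨0, by omega, ?_, ?_⟩
      · intro i j hij hj
        have : i = j := by omega
        subst this; exact le_rfl
      · intro i j hi hij hj
        have : i = j := by omega
        subst this; exact le_rfl
    · have := hdn 0 1 (by omega) (by omega) (by omega)
      simp only [key 1 le_rfl] at this
      have : r ≤ 1 := by simpa using this
      omega
  · refine ⟨m, hme, ?_, ?_⟩
    · intro i j hij hjm
      rcases Nat.eq_zero_or_pos i with hi | hi
      · subst hi
        rw [h0]
        exact hpos j (le_trans hjm hme)
      · rcases Nat.eq_zero_or_pos j with hj | hj
        · omega
        · have := hup i j hij hjm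
          simp only [key i hi, key j hj] at this
          omega
    · intro i j hmi hij hje
      have hi : 1 ≤ i := by omega
      have hj : 1 ≤ j := by omega
      have := hdn i j hmi hij hje
      simp only [key i hi, key j hj] at this
      omega
end

section
/- Let k be a field, let A = ⊕_{i=0}^{e} A_i be a standard graded artinian k-algebra with h-vector h_i = dim_k A_i, and let L ∈ A_1 be such that for every i the multiplication map ·L : A_i → A_{i+1} has maximal rank (i.e., is injective or surjective). Then the h-vector (h_0, h_1, ..., h_e) is unimodal. -/
lemma mono_of_step (f : ℕ → ℕ) (m : ℕ) (h : ∀ i, i < m → f i ≤ f (i + 1)) :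
    ∀ i j, i ≤ j → j ≤ m → f i ≤ f j := by
  intro i j hij hjm
  induction hij with
  | refl => exact le_rfl
  | @step n hn ih => exact le_trans (ih (by omega)) (h n (by omega))

lemma anti_of_step (f : ℕ → ℕ) (m e : ℕ) (h : ∀ i, m ≤ i → i < e → f (i + 1) ≤ f i) :
    ∀ i j, m ≤ i → i ≤ j → j ≤ e → f j ≤ f i := by
  intro i j hmi hij
  induction hij with
  | refl => exact fun _ => le_rfl
  | @step n hn ih =>
    exact fun hje => le_trans (h n (le_trans hmi hn) (by omega)) (ih (by omega))

theorem stmt_13 (k : Type*) [Field k] (B : Type*) [CommRing B] [Algebra k B]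
    (A : ℕ → Submodule k B)
    (hfin : ∀ i, FiniteDimensional k (A i))
    (h0 : Module.finrank k (A 0) = 1)
    (hgen : ∀ i, A (i + 1) = A 1 * A i)
    (e : ℕ) (hart : ∀ i, e < i → A i = ⊥)
    (L : B) (hL : L ∈ A 1)
    (hmax : ∀ i, (∀ x ∈ A i, L * x = 0 → x = 0) ∨ (∀ y ∈ A (i + 1), ∃ x ∈ A i, L * x = y)) :
    Unimodal (fun i => Module.finrank k (A i)) e := by
  classical
  haveI := hfin
  -- the multiplication-by-L linear map
  have hmem : ∀ i, ∀ x ∈ A i, L * x ∈ A (i + 1) := by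
    intro i x hx
    rw [hgen]
    exact Submodule.mul_mem_mul hL hx
  let μ : ∀ i, A i →ₗ[k] A (i + 1) := fun i =>
    { toFun := fun x => ⟨L * x, hmem i x x.2⟩
      map_add' := fun x y => by ext; simp [mul_add]
      map_smul' := fun c x => by ext; simp [Algebra.mul_smul_comm] }
  -- injectivity gives dimension increase
  have dim_le : ∀ i, (∀ x ∈ A i, L * x = 0 → x = 0) →
      Module.finrank k (A i) ≤ Module.finrank k (A (i + 1)) := by
    intro i hi
    apply LinearMap.finrank_le_finrank_of_injective (f := μ i)
    intro x y hxy
    have : L * ((x : B) - y) = 0 := by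
      have := congrArg (Subtype.val) hxy
      simp only [μ, LinearMap.coe_mk, AddHom.coe_mk] at this
      rw [mul_sub, this, sub_self]
    have hz := hi ((x : B) - y) (sub_mem x.2 y.2) this
    exact Subtype.ext (by linear_combination (norm := ring_nf) hz)
  -- surjectivity gives dimension decrease
  have dim_ge : ∀ i, (∀ y ∈ A (i + 1), ∃ x ∈ A i, L * x = y) →
      Module.finrank k (A (i + 1)) ≤ Module.finrank k (A i) := by
    intro i hi
    have hsurj : Function.Surjective (μ i) := by
      rintro ⟨y, hy⟩
      obtain ⟨x, hx, hxy⟩ := hi y hy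
      exact ⟨⟨x, hx⟩, Subtype.ext hxy⟩
    calc Module.finrank k (A (i + 1))
        = Module.finrank k (LinearMap.range (μ i)) := by
          rw [LinearMap.range_eq_top.mpr hsurj, finrank_top]
      _ ≤ Module.finrank k (A i) := LinearMap.finrank_range_le (μ i)
  -- surjectivity propagates
  have step : ∀ i, (∀ y ∈ A (i + 1), ∃ x ∈ A i, L * x = y) →
      (∀ y ∈ A (i + 2), ∃ x ∈ A (i + 1), L * x = y) := by
    intro i hi y hy
    rw [hgen] at hy
    refine Submodule.mul_induction_on hy ?_ ?_
    · intro a ha b hb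
      obtain ⟨x, hx, hxb⟩ := hi b hb
      refine ⟨a * x, ?_, by rw [← hxb]; ring⟩
      rw [hgen]; exact Submodule.mul_mem_mul ha hx
    · rintro x y ⟨x1, hx1, e1⟩ ⟨x2, hx2, e2⟩
      exact ⟨x1 + x2, add_mem hx1 hx2, by rw [mul_add, e1, e2]⟩
  by_cases h : ∃ i, i ≤ e ∧ ∀ y ∈ A (i + 1), ∃ x ∈ A i, L * x = y
  · set m := Nat.find h with hm
    obtain ⟨hme, hsurjm⟩ := Nat.find_spec h
    refine ⟨m, hme, ?_, ?_⟩
    · apply mono_of_step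
      intro i him
      apply dim_le
      rcases hmax i with hinj | hsurj
      · exact hinj
      · exact absurd ⟨by omega, hsurj⟩ (Nat.find_min h him)
    · have hall : ∀ i, m ≤ i → ∀ y ∈ A (i + 1), ∃ x ∈ A i, L * x = y := by
        intro i hmi
        induction i, hmi using Nat.le_induction with
        | base => exact hsurjm
        | succ n hn ih => exact step n ih
      apply anti_of_step
      intro i hmi _
      exact dim_ge i (hall i hmi)
  · refine ⟨e, le_rfl, ?_, ?_⟩
    · apply mono_of_step
      intro i hie
      apply dim_le
      rcases hmax i with hinj | hsurj
      · exact hinj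
      · exact absurd (⟨i, by omega, hsurj⟩ : ∃ i, i ≤ e ∧ ∀ y ∈ A (i + 1), ∃ x ∈ A i, L * x = y) h
    · intro i j hei hij hje
      have : i = j := by omega
      rw [this]
end
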